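/- arXiv:2501.12251 — 8 statements merged into one kernel-verified Lean document; each statement's English description precedes it below -/
import Mathlib

section
/- If θ = ⟨(μ_θ, ν_θ); r_θ⟩ and κ = ⟨(μ_κ, ν_κ); r_κ⟩ are D-IFVs, then θ ⊕_q κ := ⟨(1−(1−μ_θ)(1−μ_κ), ν_θ·ν_κ); r_θ·r_κ/√2⟩ is again a D-IFV; explicitly, 1−(1−μ_θ)(1−μ_κ) ∈ [0,1], ν_θ·ν_κ ∈ [0,1], (1−(1−μ_θ)(1−μ_κ)) + ν_θ·ν_κ ≤ 1, and r_θ·r_κ/√2 ∈ [0,√2]. -/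
open Set

theorem one_sub_one_sub_mul_one_sub_mem_Icc {a b : ℝ} (ha : a ∈ Icc (0 : ℝ) 1)
    (hb : b ∈ Icc (0 : ℝ) 1) : 1 - (1 - a) * (1 - b) ∈ Icc (0 : ℝ) 1 :=
  Icc.mem_iff_one_sub_mem.mp <| unitInterval.mul_mem
    (Icc.mem_iff_one_sub_mem.mp ha) (Icc.mem_iff_one_sub_mem.mp hb)

theorem one_sub_one_sub_mul_one_sub_add_mul_le_one {a b c d : ℝ} (hc : 0 ≤ c) (hd : 0 ≤ d)
    (hac : a + c ≤ 1) (hbd : b + d ≤ 1) : 1 - (1 - a) * (1 - b) + c * d ≤ 1 := by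
  have : c * d ≤ (1 - a) * (1 - b) :=
    mul_le_mul (by linarith) (by linarith) hd (by linarith)
  linarith

theorem mul_div_mem_Icc_of_mem_Icc {c x y : ℝ} (hx : x ∈ Icc 0 c) (hy : y ∈ Icc 0 c) :
    x * y / c ∈ Icc 0 c := by
  have hc : 0 ≤ c := hx.1.trans hx.2
  refine ⟨by have := hx.1; have := hy.1; positivity, ?_⟩
  calc x * y / c ≤ c * c / c :=
        div_le_div_of_nonneg_right (mul_le_mul hx.2 hy.2 hy.1 hc) hc
    _ = c := mul_self_div_self c

/-- If θ and κ are D-IFVs, then θ ⊕_q κ is again a D-IFV. -/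
theorem dIFV_oplus_q (μθ νθ rθ μκ νκ rκ : ℝ)
    (hμθ : μθ ∈ Set.Icc (0:ℝ) 1) (hνθ : νθ ∈ Set.Icc (0:ℝ) 1) (hθ : μθ + νθ ≤ 1)
    (hrθ : rθ ∈ Set.Icc (0:ℝ) (Real.sqrt 2))
    (hμκ : μκ ∈ Set.Icc (0:ℝ) 1) (hνκ : νκ ∈ Set.Icc (0:ℝ) 1) (hκ : μκ + νκ ≤ 1)
    (hrκ : rκ ∈ Set.Icc (0:ℝ) (Real.sqrt 2)) :
    (1 - (1 - μθ) * (1 - μκ)) ∈ Set.Icc (0:ℝ) 1 ∧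
    νθ * νκ ∈ Set.Icc (0:ℝ) 1 ∧
    (1 - (1 - μθ) * (1 - μκ)) + νθ * νκ ≤ 1 ∧
    rθ * rκ / Real.sqrt 2 ∈ Set.Icc (0:ℝ) (Real.sqrt 2) :=
  ⟨one_sub_one_sub_mul_one_sub_mem_Icc hμθ hμκ,
    unitInterval.mul_mem hνθ hνκ,
    one_sub_one_sub_mul_one_sub_add_mul_le_one hνθ.1 hνκ.1 hθ hκ,
    mul_div_mem_Icc_of_mem_Icc hrθ hrκ⟩
end

section
/- If θ = ⟨(μ_θ, ν_θ); r_θ⟩ and κ = ⟨(μ_κ, ν_κ); r_κ⟩ are D-IFVs, then θ ⊕_p κ := ⟨(1−(1−μ_θ)(1−μ_κ), ν_θ·ν_κ); √2 − √2(1 − r_θ/√2)(1 − r_κ/√2)⟩ is again a D-IFV; explicitly, 1−(1−μ_θ)(1−μ_κ) ∈ [0,1], ν_θ·ν_κ ∈ [0,1], (1−(1−μ_θ)(1−μ_κ)) + ν_θ·ν_κ ≤ 1, and √2 − √2(1 − r_θ/√2)(1 − r_κ/√2) ∈ [0,√2]. -/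
/-! Membership and radius of `θ ⊕_p κ` are both probabilistic sums `1 - (1 - a)(1 - b)` of numbers
in `[0, 1]` (for the radius, after rescaling by `√2`), and the unit interval is closed under
`t ↦ 1 - t` and products. Non-membership is a product, bounded by `(1 - μθ)(1 - μκ)` factorwise. -/

open Set

theorem one_sub_one_sub_mul_one_sub_add_mul_le_one_s1 {μ ν μ' ν' : ℝ} (hν : 0 ≤ ν) (hν' : 0 ≤ ν')
    (h : μ + ν ≤ 1) (h' : μ' + ν' ≤ 1) : 1 - (1 - μ) * (1 - μ') + ν * ν' ≤ 1 := by
  have : ν * ν' ≤ (1 - μ) * (1 - μ') :=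
    mul_le_mul (by linarith) (by linarith) hν' (by linarith)
  linarith

theorem sub_mul_one_sub_div_mul_one_sub_div_mem_Icc {c r s : ℝ} (hr : r ∈ Icc 0 c)
    (hs : s ∈ Icc 0 c) : c - c * (1 - r / c) * (1 - s / c) ∈ Icc 0 c := by
  have hc : 0 ≤ c := hr.1.trans hr.2
  obtain ⟨h0, h1⟩ := one_sub_one_sub_mul_one_sub_mem_Icc
    (unitInterval.div_mem hr.1 hc hr.2) (unitInterval.div_mem hs.1 hc hs.2)
  rw [show c - c * (1 - r / c) * (1 - s / c) = c * (1 - (1 - r / c) * (1 - s / c)) by ring]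
  exact ⟨mul_nonneg hc h0, mul_le_of_le_one_right hc h1⟩

/-- If θ and κ are D-IFVs, then θ ⊕_p κ is again a D-IFV. -/
theorem dIFV_oplus_p (μθ νθ rθ μκ νκ rκ : ℝ)
    (hμθ : μθ ∈ Set.Icc (0:ℝ) 1) (hνθ : νθ ∈ Set.Icc (0:ℝ) 1) (hθ : μθ + νθ ≤ 1)
    (hrθ : rθ ∈ Set.Icc (0:ℝ) (Real.sqrt 2))
    (hμκ : μκ ∈ Set.Icc (0:ℝ) 1) (hνκ : νκ ∈ Set.Icc (0:ℝ) 1) (hκ : μκ + νκ ≤ 1)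
    (hrκ : rκ ∈ Set.Icc (0:ℝ) (Real.sqrt 2)) :
    (1 - (1 - μθ) * (1 - μκ)) ∈ Set.Icc (0:ℝ) 1 ∧
    νθ * νκ ∈ Set.Icc (0:ℝ) 1 ∧
    (1 - (1 - μθ) * (1 - μκ)) + νθ * νκ ≤ 1 ∧
    (Real.sqrt 2 - Real.sqrt 2 * (1 - rθ / Real.sqrt 2) * (1 - rκ / Real.sqrt 2))
      ∈ Set.Icc (0:ℝ) (Real.sqrt 2) :=
  ⟨one_sub_one_sub_mul_one_sub_mem_Icc hμθ hμκ,
    unitInterval.mul_mem hνθ hνκ,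
    one_sub_one_sub_mul_one_sub_add_mul_le_one_s1 hνθ.1 hνκ.1 hθ hκ,
    sub_mul_one_sub_div_mul_one_sub_div_mem_Icc hrθ hrκ⟩
end

section
/- If θ = ⟨(μ_θ, ν_θ); r_θ⟩ and κ = ⟨(μ_κ, ν_κ); r_κ⟩ are D-IFVs, then θ ⊗_p κ := ⟨(μ_θ·μ_κ, 1−(1−ν_θ)(1−ν_κ)); √2 − √2(1 − r_θ/√2)(1 − r_κ/√2)⟩ is again a D-IFV; explicitly, μ_θ·μ_κ ∈ [0,1], 1−(1−ν_θ)(1−ν_κ) ∈ [0,1], μ_θ·μ_κ + (1−(1−ν_θ)(1−ν_κ)) ≤ 1, and √2 − √2(1 − r_θ/√2)(1 − r_κ/√2) ∈ [0,√2]. -/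
/-!
Membership degrees combine by the product t-norm `a * b` and non-membership degrees by its dual
t-conorm, the probabilistic sum `1 - (1 - a) * (1 - b)`; both preserve `[0, 1]`, and since
`μ ≤ 1 - ν` in each factor, `μθ μκ ≤ (1 - νθ)(1 - νκ)`. The radius is the probabilistic sum of the
normalised radii `r / √2 ∈ [0, 1]`, rescaled by `√2`.
-/

open Set

def probSum (a b : ℝ) : ℝ := 1 - (1 - a) * (1 - b)

lemma probSum_mem_unitInterval {a b : ℝ} (ha : a ∈ Icc (0 : ℝ) 1) (hb : b ∈ Icc (0 : ℝ) 1) :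
    probSum a b ∈ Icc (0 : ℝ) 1 :=
  Icc.mem_iff_one_sub_mem.mp <|
    unitInterval.mul_mem (Icc.mem_iff_one_sub_mem.mp ha) (Icc.mem_iff_one_sub_mem.mp hb)

lemma mul_add_probSum_le_one {a b c d : ℝ} (ha : 0 ≤ a) (hb : 0 ≤ b)
    (hac : a + c ≤ 1) (hbd : b + d ≤ 1) : a * b + probSum c d ≤ 1 := by
  have hab : a * b ≤ (1 - c) * (1 - d) :=
    mul_le_mul (by linarith) (by linarith) hb (by linarith)
  unfold probSum
  linarith

lemma div_mem_unitInterval {c x : ℝ} (hc : 0 < c) (hx : x ∈ Icc 0 c) :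
    x / c ∈ Icc (0 : ℝ) 1 :=
  ⟨div_nonneg hx.1 hc.le, (div_le_one hc).mpr hx.2⟩

lemma scaled_probSum_mem_Icc {c x y : ℝ} (hc : 0 < c) (hx : x ∈ Icc 0 c) (hy : y ∈ Icc 0 c) :
    c - c * (1 - x / c) * (1 - y / c) ∈ Icc 0 c := by
  have hs := probSum_mem_unitInterval (div_mem_unitInterval hc hx) (div_mem_unitInterval hc hy)
  have hscale : c - c * (1 - x / c) * (1 - y / c) = c * probSum (x / c) (y / c) := by
    unfold probSum
    ring
  rw [hscale]
  exact ⟨mul_nonneg hc.le hs.1, mul_le_of_le_one_right hc.le hs.2⟩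

/-- If θ and κ are D-IFVs, then θ ⊗_p κ is again a D-IFV. -/
theorem dIFV_otimes_p (μθ νθ rθ μκ νκ rκ : ℝ)
    (hμθ : μθ ∈ Set.Icc (0:ℝ) 1) (hνθ : νθ ∈ Set.Icc (0:ℝ) 1) (hθ : μθ + νθ ≤ 1)
    (hrθ : rθ ∈ Set.Icc (0:ℝ) (Real.sqrt 2))
    (hμκ : μκ ∈ Set.Icc (0:ℝ) 1) (hνκ : νκ ∈ Set.Icc (0:ℝ) 1) (hκ : μκ + νκ ≤ 1)
    (hrκ : rκ ∈ Set.Icc (0:ℝ) (Real.sqrt 2)) :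
    μθ * μκ ∈ Set.Icc (0:ℝ) 1 ∧
    (1 - (1 - νθ) * (1 - νκ)) ∈ Set.Icc (0:ℝ) 1 ∧
    μθ * μκ + (1 - (1 - νθ) * (1 - νκ)) ≤ 1 ∧
    (Real.sqrt 2 - Real.sqrt 2 * (1 - rθ / Real.sqrt 2) * (1 - rκ / Real.sqrt 2))
      ∈ Set.Icc (0:ℝ) (Real.sqrt 2) :=
  ⟨unitInterval.mul_mem hμθ hμκ,
    probSum_mem_unitInterval hνθ hνκ,
    mul_add_probSum_le_one hμθ.1 hμκ.1 hθ hκ,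
    scaled_probSum_mem_Icc (by positivity) hrθ hrκ⟩
end

section
/- If θ = ⟨(μ_θ, ν_θ); r_θ⟩ is a D-IFV and ζ > 0 is a real number, then ζ_q θ := ⟨(1−(1−μ_θ)^ζ, ν_θ^ζ); √2·(r_θ/√2)^ζ⟩ is again a D-IFV; explicitly, 1−(1−μ_θ)^ζ ∈ [0,1], ν_θ^ζ ∈ [0,1], (1−(1−μ_θ)^ζ) + ν_θ^ζ ≤ 1, and √2·(r_θ/√2)^ζ ∈ [0,√2]. -/
open Set

lemma rpow_mem_Icc_zero_one {x ζ : ℝ} (hx : x ∈ Icc 0 1) (hζ : 0 ≤ ζ) : x ^ ζ ∈ Icc 0 1 :=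
  ⟨Real.rpow_nonneg hx.1 ζ, Real.rpow_le_one hx.1 hx.2 hζ⟩

lemma mul_rpow_div_mem_Icc {c r ζ : ℝ} (hc : 0 < c) (hr : r ∈ Icc 0 c) (hζ : 0 ≤ ζ) :
    c * (r / c) ^ ζ ∈ Icc 0 c := by
  have hrc : r / c ∈ Icc 0 1 := ⟨div_nonneg hr.1 hc.le, (div_le_one hc).mpr hr.2⟩
  obtain ⟨h0, h1⟩ := rpow_mem_Icc_zero_one hrc hζ
  exact ⟨mul_nonneg hc.le h0, mul_le_of_le_one_right hc.le h1⟩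

lemma one_sub_rpow_one_sub_add_rpow_le_one {μ ν ζ : ℝ} (hν : 0 ≤ ν) (hμν : μ + ν ≤ 1)
    (hζ : 0 ≤ ζ) : 1 - (1 - μ) ^ ζ + ν ^ ζ ≤ 1 := by
  have : ν ^ ζ ≤ (1 - μ) ^ ζ := Real.rpow_le_rpow hν (by linarith) hζ
  linarith

/-- If θ is a D-IFV and ζ > 0, then ζ_q θ is again a D-IFV.
Real powers `x ^ ζ` are `Real.rpow`. -/
theorem dIFV_smul_q (μθ νθ rθ ζ : ℝ)
    (hμθ : μθ ∈ Set.Icc (0:ℝ) 1) (hνθ : νθ ∈ Set.Icc (0:ℝ) 1) (hθ : μθ + νθ ≤ 1)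
    (hrθ : rθ ∈ Set.Icc (0:ℝ) (Real.sqrt 2)) (hζ : 0 < ζ) :
    (1 - (1 - μθ) ^ ζ) ∈ Set.Icc (0:ℝ) 1 ∧
    νθ ^ ζ ∈ Set.Icc (0:ℝ) 1 ∧
    (1 - (1 - μθ) ^ ζ) + νθ ^ ζ ≤ 1 ∧
    Real.sqrt 2 * (rθ / Real.sqrt 2) ^ ζ ∈ Set.Icc (0:ℝ) (Real.sqrt 2) :=
  ⟨Icc.one_sub_mem (rpow_mem_Icc_zero_one (Icc.one_sub_mem hμθ) hζ.le),
    rpow_mem_Icc_zero_one hνθ hζ.le,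
    one_sub_rpow_one_sub_add_rpow_le_one hνθ.1 hθ hζ.le,
    mul_rpow_div_mem_Icc (by positivity) hrθ hζ.le⟩
end

section
/- Let θ_1, …, θ_m be D-IFVs and let ω_1, …, ω_m ∈ [0,1] with ∑_{k=1}^m ω_k = 1. Then the weighted arithmetic aggregation D-IFWAO_q(θ_1,…,θ_m) := ⟨(1 − ∏_{k=1}^m (1−μ_{θ_k})^{ω_k}, ∏_{k=1}^m ν_{θ_k}^{ω_k}); ∏_{k=1}^m r_{θ_k}^{ω_k}⟩ is a D-IFV; explicitly, its first two components lie in [0,1], their sum is at most 1, and ∏_{k=1}^m r_{θ_k}^{ω_k} ∈ [0,√2]. -/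
open Finset

/-!
A weighted product `∏ xₖ ^ ωₖ` with nonnegative weights is monotone in the bases, and for weights
summing to one it is bounded by any common upper bound `c` of the bases, since `∏ c ^ ωₖ = c`.
Hence the aggregated membership and non-membership lie in `[0, 1]` and the radius in `[0, √2]`;
the bound on their sum is `∏ νₖ ^ ωₖ ≤ ∏ (1 - μₖ) ^ ωₖ`, i.e. monotonicity applied to `νₖ ≤ 1 - μₖ`.
-/

namespace Finset

variable {ι : Type*} {s : Finset ι} {x y w : ι → ℝ}

theorem prod_rpow_nonneg (hx : ∀ i ∈ s, 0 ≤ x i) : 0 ≤ ∏ i ∈ s, x i ^ w i :=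
  prod_nonneg fun i hi => Real.rpow_nonneg (hx i hi) _

theorem prod_rpow_le_prod_rpow (hx : ∀ i ∈ s, 0 ≤ x i) (hxy : ∀ i ∈ s, x i ≤ y i)
    (hw : ∀ i ∈ s, 0 ≤ w i) : ∏ i ∈ s, x i ^ w i ≤ ∏ i ∈ s, y i ^ w i :=
  prod_le_prod (fun i hi => Real.rpow_nonneg (hx i hi) _)
    fun i hi => Real.rpow_le_rpow (hx i hi) (hxy i hi) (hw i hi)

theorem prod_rpow_le_of_sum_eq_one {c : ℝ} (hx : ∀ i ∈ s, x i ∈ Set.Icc 0 c)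
    (hw : ∀ i ∈ s, 0 ≤ w i) (hw_sum : ∑ i ∈ s, w i = 1) : ∏ i ∈ s, x i ^ w i ≤ c := by
  have hc : ∀ i ∈ s, 0 ≤ c := fun i hi => (hx i hi).1.trans (hx i hi).2
  calc ∏ i ∈ s, x i ^ w i ≤ ∏ i ∈ s, c ^ w i :=
        prod_rpow_le_prod_rpow (fun i hi => (hx i hi).1) (fun i hi => (hx i hi).2) hw
    _ = c := by
        obtain ⟨i, hi⟩ := nonempty_of_sum_ne_zero (hw_sum.trans_ne one_ne_zero)
        rw [← Real.rpow_sum_of_nonneg (hc i hi) hw, hw_sum, Real.rpow_one]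

end Finset

/-- the weighted arithmetic aggregation D-IFWAO_q of D-IFVs is a D-IFV.
Real powers `x ^ ω` are `Real.rpow`. -/
theorem dIFWAO_q_isDIFV (m : ℕ) (μ ν r ω : Fin m → ℝ)
    (hμ : ∀ k, μ k ∈ Set.Icc (0:ℝ) 1) (hν : ∀ k, ν k ∈ Set.Icc (0:ℝ) 1)
    (hμν : ∀ k, μ k + ν k ≤ 1) (hr : ∀ k, r k ∈ Set.Icc (0:ℝ) (Real.sqrt 2))
    (hω : ∀ k, ω k ∈ Set.Icc (0:ℝ) 1) (hωsum : ∑ k, ω k = 1) :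
    (1 - ∏ k, (1 - μ k) ^ (ω k)) ∈ Set.Icc (0:ℝ) 1 ∧
    (∏ k, (ν k) ^ (ω k)) ∈ Set.Icc (0:ℝ) 1 ∧
    (1 - ∏ k, (1 - μ k) ^ (ω k)) + (∏ k, (ν k) ^ (ω k)) ≤ 1 ∧
    (∏ k, (r k) ^ (ω k)) ∈ Set.Icc (0:ℝ) (Real.sqrt 2) := by
  have hω0 : ∀ k ∈ univ, 0 ≤ ω k := fun k _ => (hω k).1
  have hμc : ∀ k ∈ univ, 1 - μ k ∈ Set.Icc (0:ℝ) 1 := fun k _ =>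
    ⟨by linarith [(hμ k).2], by linarith [(hμ k).1]⟩
  have hA0 : 0 ≤ ∏ k, (1 - μ k) ^ ω k := prod_rpow_nonneg fun k hk => (hμc k hk).1
  have hA1 : ∏ k, (1 - μ k) ^ ω k ≤ 1 := prod_rpow_le_of_sum_eq_one hμc hω0 hωsum
  have hB0 : 0 ≤ ∏ k, ν k ^ ω k := prod_rpow_nonneg fun k _ => (hν k).1
  have hBA : ∏ k, ν k ^ ω k ≤ ∏ k, (1 - μ k) ^ ω k :=
    prod_rpow_le_prod_rpow (fun k _ => (hν k).1) (fun k _ => by linarith [hμν k]) hω0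
  refine ⟨⟨by linarith, by linarith⟩, ⟨hB0, by linarith⟩, by linarith, ?_, ?_⟩
  · exact prod_rpow_nonneg fun k _ => (hr k).1
  · exact prod_rpow_le_of_sum_eq_one (fun k _ => hr k) hω0 hωsum
end

section
/- Let θ_1, …, θ_m be D-IFVs and let ω_1, …, ω_m ∈ [0,1] with ∑_{k=1}^m ω_k = 1. Then the weighted arithmetic aggregation D-IFWAO_p(θ_1,…,θ_m) := ⟨(1 − ∏_{k=1}^m (1−μ_{θ_k})^{ω_k}, ∏_{k=1}^m ν_{θ_k}^{ω_k}); √2 − ∏_{k=1}^m (√2 − r_{θ_k})^{ω_k}⟩ is a D-IFV; explicitly, its first two components lie in [0,1], their sum is at most 1, and √2 − ∏_{k=1}^m (√2 − r_{θ_k})^{ω_k} ∈ [0,√2]. -/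
open Finset

/-!
Each component is a weighted geometric mean `∏ xₖ ^ ωₖ` of numbers in an interval `[0, c]`, and
by AM-GM such a mean lies below the arithmetic mean `∑ ωₖ xₖ ≤ c`, hence again in `[0, c]`.
The constraint `μ + ν ≤ 1` survives because `νₖ ≤ 1 - μₖ` and weighted geometric means are
monotone in the data.
-/

namespace Real

variable {ι : Type*} {s : Finset ι} {w x y : ι → ℝ}

theorem prod_rpow_mem_Icc_of_sum_eq_one {c : ℝ} (hw : ∀ i ∈ s, 0 ≤ w i)
    (hw_sum : ∑ i ∈ s, w i = 1) (hx : ∀ i ∈ s, x i ∈ Set.Icc 0 c) :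
    ∏ i ∈ s, x i ^ w i ∈ Set.Icc 0 c := by
  refine ⟨prod_nonneg fun i hi => rpow_nonneg (hx i hi).1 _, ?_⟩
  calc ∏ i ∈ s, x i ^ w i
      ≤ ∑ i ∈ s, w i * x i :=
        geom_mean_le_arith_mean_weighted s w x hw hw_sum fun i hi => (hx i hi).1
    _ ≤ ∑ i ∈ s, w i * c :=
        sum_le_sum fun i hi => mul_le_mul_of_nonneg_left (hx i hi).2 (hw i hi)
    _ = c := by rw [← sum_mul, hw_sum, one_mul]

theorem prod_rpow_le_prod_rpow (hw : ∀ i ∈ s, 0 ≤ w i) (hx : ∀ i ∈ s, 0 ≤ x i)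
    (hxy : ∀ i ∈ s, x i ≤ y i) : ∏ i ∈ s, x i ^ w i ≤ ∏ i ∈ s, y i ^ w i :=
  prod_le_prod (fun i hi => rpow_nonneg (hx i hi) _)
    fun i hi => rpow_le_rpow (hx i hi) (hxy i hi) (hw i hi)

end Real

/-- the weighted arithmetic aggregation D-IFWAO_p of D-IFVs is a D-IFV.
Real powers `x ^ ω` are `Real.rpow`. -/
theorem dIFWAO_p_isDIFV (m : ℕ) (μ ν r ω : Fin m → ℝ)
    (hμ : ∀ k, μ k ∈ Set.Icc (0:ℝ) 1) (hν : ∀ k, ν k ∈ Set.Icc (0:ℝ) 1)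
    (hμν : ∀ k, μ k + ν k ≤ 1) (hr : ∀ k, r k ∈ Set.Icc (0:ℝ) (Real.sqrt 2))
    (hω : ∀ k, ω k ∈ Set.Icc (0:ℝ) 1) (hωsum : ∑ k, ω k = 1) :
    (1 - ∏ k, (1 - μ k) ^ (ω k)) ∈ Set.Icc (0:ℝ) 1 ∧
    (∏ k, (ν k) ^ (ω k)) ∈ Set.Icc (0:ℝ) 1 ∧
    (1 - ∏ k, (1 - μ k) ^ (ω k)) + (∏ k, (ν k) ^ (ω k)) ≤ 1 ∧
    (Real.sqrt 2 - ∏ k, (Real.sqrt 2 - r k) ^ (ω k)) ∈ Set.Icc (0:ℝ) (Real.sqrt 2) := by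
  have hω₀ : ∀ k ∈ univ, 0 ≤ ω k := fun k _ => (hω k).1
  have h_mean {c : ℝ} {x : Fin m → ℝ} (hx : ∀ k, x k ∈ Set.Icc 0 c) :
      ∏ k, x k ^ ω k ∈ Set.Icc 0 c :=
    Real.prod_rpow_mem_Icc_of_sum_eq_one hω₀ hωsum fun k _ => hx k
  have h_μ_mean : ∏ k, (1 - μ k) ^ ω k ∈ Set.Icc 0 1 :=
    h_mean fun k => Set.sub_mem_Icc_zero_iff_right.mpr (hμ k)
  have h_ν_le : ∏ k, ν k ^ ω k ≤ ∏ k, (1 - μ k) ^ ω k :=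
    Real.prod_rpow_le_prod_rpow hω₀ (fun k _ => (hν k).1) fun k _ => by linarith [hμν k]
  have h_r_mean : ∏ k, (Real.sqrt 2 - r k) ^ ω k ∈ Set.Icc 0 (Real.sqrt 2) :=
    h_mean fun k => Set.sub_mem_Icc_zero_iff_right.mpr (hr k)
  exact ⟨Set.sub_mem_Icc_zero_iff_right.mpr h_μ_mean, h_mean hν, by linarith,
    Set.sub_mem_Icc_zero_iff_right.mpr h_r_mean⟩
end

section
/- Let τ be a fuzzy measure on X = {1,…,m}, let θ_1, …, θ_m be D-IFVs, let σ be a permutation of {1,…,m}, and set F_k := {σ(k),…,σ(m)} for k = 1,…,m, F_{m+1} := ∅, and w_k := τ(F_k) − τ(F_{k+1}). Then the disc intuitionistic fuzzy Choquet arithmetic integral D-IFCAIO_q^τ(θ_1,…,θ_m) := ⟨(1 − ∏_{k=1}^m (1−μ_{θ_{σ(k)}})^{w_k}, ∏_{k=1}^m ν_{θ_{σ(k)}}^{w_k}); ∏_{k=1}^m r_{θ_{σ(k)}}^{w_k}⟩ is a D-IFV; explicitly, its first two components lie in [0,1], their sum is at most 1, and ∏_{k=1}^m r_{θ_{σ(k)}}^{w_k}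 ∈ [0,√2]. -/
/-!
The Choquet weights `w k = τ(F k) - τ(F (k+1))` come from a decreasing chain of sets running
from `univ` to `∅`, so by monotonicity of `τ` they are nonnegative, and they telescope to
`τ univ - τ ∅ = 1`. Each component of the integral is therefore a weighted geometric mean of
values in the relevant interval, and weighted geometric means are monotone in their arguments
and fix constants; `ν ≤ 1 - μ` then gives the sum condition.
-/

open Finset

section WeightedProduct

variable {ι : Type*} {s : Finset ι} {w : ι → ℝ}

lemma prod_rpow_le_prod_rpow {f g : ι → ℝ} (hw : ∀ i ∈ s, 0 ≤ w i)
    (hf : ∀ i ∈ s, 0 ≤ f i) (hfg : ∀ i ∈ s, f i ≤ g i) :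
    ∏ i ∈ s, f i ^ w i ≤ ∏ i ∈ s, g i ^ w i :=
  prod_le_prod (fun i hi => Real.rpow_nonneg (hf i hi) _)
    fun i hi => Real.rpow_le_rpow (hf i hi) (hfg i hi) (hw i hi)

lemma prod_rpow_mem_Icc_zero_one {f : ι → ℝ} (hw : ∀ i ∈ s, 0 ≤ w i)
    (hf : ∀ i ∈ s, f i ∈ Set.Icc (0 : ℝ) 1) :
    ∏ i ∈ s, f i ^ w i ∈ Set.Icc (0 : ℝ) 1 :=
  ⟨prod_nonneg fun i hi => Real.rpow_nonneg (hf i hi).1 _,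
    prod_le_one (fun i hi => Real.rpow_nonneg (hf i hi).1 _)
      fun i hi => Real.rpow_le_one (hf i hi).1 (hf i hi).2 (hw i hi)⟩

lemma prod_rpow_mem_Icc_of_sum_eq_one {f : ι → ℝ} {c : ℝ} (hw : ∀ i ∈ s, 0 ≤ w i)
    (hsum : ∑ i ∈ s, w i = 1) (hc : 0 ≤ c) (hf : ∀ i ∈ s, f i ∈ Set.Icc 0 c) :
    ∏ i ∈ s, f i ^ w i ∈ Set.Icc 0 c := by
  refine ⟨prod_nonneg fun i hi => Real.rpow_nonneg (hf i hi).1 _, ?_⟩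
  calc ∏ i ∈ s, f i ^ w i ≤ ∏ i ∈ s, c ^ w i :=
        prod_rpow_le_prod_rpow hw (fun i hi => (hf i hi).1) fun i hi => (hf i hi).2
    _ = c := Real.geom_mean_weighted_of_constant s w _ c hw hsum (fun _ _ => hc) fun _ _ _ => rfl

end WeightedProduct

section ChoquetWeights

lemma Fin.sum_sub_succ {M : Type*} [AddCommGroup M] {m : ℕ} (g : ℕ → M) : ∑ k : Fin m, (g k - g (k + 1)) = g 0 - g m := by
  rw [Fin.sum_univ_eq_sum_range (fun i => g i - g (i + 1)), sum_range_sub']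

variable {m : ℕ}

/-- `permSuffix σ n = {σ n, σ (n+1), …}`, the set `F_{n+1}` of the paper (indices are 0-based). -/
def permSuffix (σ : Equiv.Perm (Fin m)) (n : ℕ) : Finset (Fin m) :=
  (univ.filter fun j : Fin m => n ≤ j.val).image σ

lemma permSuffix_antitone (σ : Equiv.Perm (Fin m)) : Antitone (permSuffix σ) := by
  intro a b hab
  refine image_subset_image fun j hj => ?_
  simp only [mem_filter, mem_univ, true_and] at hj ⊢
  omega

@[simp] lemma permSuffix_zero (σ : Equiv.Perm (Fin m)) : permSuffix σ 0 = univ := by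
  simp [permSuffix, image_univ_equiv]

@[simp] lemma permSuffix_self (σ : Equiv.Perm (Fin m)) : permSuffix σ m = ∅ := by
  simp [permSuffix, filter_false_of_mem]

variable {α : Type*} {τ : Finset α → ℝ} {F : ℕ → Finset α}

lemma choquetWeight_nonneg (hmono : ∀ A B : Finset α, A ⊆ B → τ A ≤ τ B) (hF : Antitone F)
    (n : ℕ) : 0 ≤ τ (F n) - τ (F (n + 1)) :=
  sub_nonneg.2 (hmono _ _ (hF n.le_succ))

lemma sum_choquetWeight [Fintype α] (hempty : τ ∅ = 0) (huniv : τ univ = 1)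
    (h0 : F 0 = univ) (hm : F m = ∅) :
    ∑ k : Fin m, (τ (F k) - τ (F (k + 1))) = 1 := by
  rw [Fin.sum_sub_succ (fun n => τ (F n)), h0, hm, huniv, hempty, sub_zero]

end ChoquetWeights

theorem dIFCAIO_q_isDIFV_general (m : ℕ) (τ : Finset (Fin m) → ℝ)
    (hempty : τ ∅ = 0) (huniv : τ Finset.univ = 1)
    (hmono : ∀ A B : Finset (Fin m), A ⊆ B → τ A ≤ τ B)
    (μ ν r : Fin m → ℝ)
    (hμ : ∀ k, μ k ∈ Set.Icc (0:ℝ) 1) (hν : ∀ k, ν k ∈ Set.Icc (0:ℝ) 1)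
    (hμν : ∀ k, μ k + ν k ≤ 1) (hr : ∀ k, r k ∈ Set.Icc (0:ℝ) (Real.sqrt 2))
    (σ : Equiv.Perm (Fin m)) (F : ℕ → Finset (Fin m))
    (hF : ∀ n, F n = (Finset.univ.filter (fun j : Fin m => n ≤ j.val)).image σ)
    (w : Fin m → ℝ) (hw : ∀ k : Fin m, w k = τ (F k.val) - τ (F (k.val + 1))) :
    (1 - ∏ k, (1 - μ (σ k)) ^ (w k)) ∈ Set.Icc (0:ℝ) 1 ∧
    (∏ k, (ν (σ k)) ^ (w k)) ∈ Set.Icc (0:ℝ) 1 ∧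
    (1 - ∏ k, (1 - μ (σ k)) ^ (w k)) + (∏ k, (ν (σ k)) ^ (w k)) ≤ 1 ∧
    (∏ k, (r (σ k)) ^ (w k)) ∈ Set.Icc (0:ℝ) (Real.sqrt 2) := by
  obtain rfl : F = permSuffix σ := funext hF
  have hw0 : ∀ k ∈ univ, 0 ≤ w k :=
    fun k _ => hw k ▸ choquetWeight_nonneg hmono (permSuffix_antitone σ) k
  have hsum : ∑ k, w k = 1 := by
    simpa only [hw] using sum_choquetWeight hempty huniv (permSuffix_zero σ) (permSuffix_self σ)
  have hnonmem : ∀ k ∈ univ, 1 - μ (σ k) ∈ Set.Icc (0 : ℝ) 1 := fun k _ =>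
    ⟨sub_nonneg.2 (hμ _).2, sub_le_self _ (hμ _).1⟩
  have hM := prod_rpow_mem_Icc_zero_one hw0 hnonmem
  have hνμ : ∏ k, ν (σ k) ^ w k ≤ ∏ k, (1 - μ (σ k)) ^ w k :=
    prod_rpow_le_prod_rpow hw0 (fun k _ => (hν _).1) fun k _ => by linarith [hμν (σ k)]
  refine ⟨⟨sub_nonneg.2 hM.2, sub_le_self _ hM.1⟩,
    prod_rpow_mem_Icc_zero_one hw0 fun k _ => hν _, by linarith,
    prod_rpow_mem_Icc_of_sum_eq_one hw0 hsum (Real.sqrt_nonneg 2) fun k _ => hr _⟩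

/-- the disc intuitionistic fuzzy Choquet arithmetic integral
D-IFCAIO_q^τ of D-IFVs θ_1,…,θ_m is a D-IFV.  Here X = Fin m (0-based), σ is a
permutation, F k = {σ(k), σ(k+1), …} (so F m = ∅), and the Choquet weights are
w k = τ(F k) − τ(F (k+1)).  Real powers `x ^ w` are `Real.rpow`. -/
theorem dIFCAIO_q_isDIFV (m : ℕ) (τ : Finset (Fin m) → ℝ)
    (hrange : ∀ A, τ A ∈ Set.Icc (0:ℝ) 1)
    (hempty : τ ∅ = 0) (huniv : τ Finset.univ = 1)
    (hmono : ∀ A B : Finset (Fin m), A ⊆ B → τ A ≤ τ B)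
    (μ ν r : Fin m → ℝ)
    (hμ : ∀ k, μ k ∈ Set.Icc (0:ℝ) 1) (hν : ∀ k, ν k ∈ Set.Icc (0:ℝ) 1)
    (hμν : ∀ k, μ k + ν k ≤ 1) (hr : ∀ k, r k ∈ Set.Icc (0:ℝ) (Real.sqrt 2))
    (σ : Equiv.Perm (Fin m)) (F : ℕ → Finset (Fin m))
    (hF : ∀ n, F n = (Finset.univ.filter (fun j : Fin m => n ≤ j.val)).image σ)
    (w : Fin m → ℝ) (hw : ∀ k : Fin m, w k = τ (F k.val) - τ (F (k.val + 1))) :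
    (1 - ∏ k, (1 - μ (σ k)) ^ (w k)) ∈ Set.Icc (0:ℝ) 1 ∧
    (∏ k, (ν (σ k)) ^ (w k)) ∈ Set.Icc (0:ℝ) 1 ∧
    (1 - ∏ k, (1 - μ (σ k)) ^ (w k)) + (∏ k, (ν (σ k)) ^ (w k)) ≤ 1 ∧
    (∏ k, (r (σ k)) ^ (w k)) ∈ Set.Icc (0:ℝ) (Real.sqrt 2) :=
  dIFCAIO_q_isDIFV_general m τ hempty huniv hmono μ ν r hμ hν hμν hr σ F hF w hw
end

section
/- Let τ be a fuzzy measure on X = {1,…,m}, let θ_1, …, θ_m be D-IFVs, let σ be a permutation of {1,…,m}, and set F_k := {σ(k),…,σ(m)} for k = 1,…,m, F_{m+1} := ∅, and w_k := τ(F_k) − τ(F_{k+1}). Then the disc intuitionistic fuzzy Choquet arithmetic integral D-IFCAIO_p^τ(θ_1,…,θ_m) := ⟨(1 − ∏_{k=1}^m (1−μ_{θ_{σ(k)}})^{w_k}, ∏_{k=1}^m ν_{θ_{σ(k)}}^{w_k}); √2 − ∏_{k=1}^m (√2 − r_{θ_{σ(k)}})^{w_k}⟩ is a D-IFV; explicitly,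 its first two components lie in [0,1], their sum is at most 1, and √2 − ∏_{k=1}^m (√2 − r_{θ_{σ(k)}})^{w_k} ∈ [0,√2]. -/
/-!
The Choquet weights `w k = τ(F k) - τ(F (k+1))` are nonnegative because `τ` is monotone and the
`F k` decrease, and they telescope to `τ(X) - τ(∅) = 1`. Each product in the integral is therefore a
weighted geometric mean, which lies between `0` and any common upper bound `c` of its bases
(`1` or `√2`), and is monotone in the bases; the latter gives `∏ ν^w ≤ ∏ (1 - μ)^w`.
-/

open Finset

section WeightedProduct

variable {ι : Type*} [Fintype ι] {w : ι → ℝ}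

theorem prod_rpow_le_prod_rpow_s16 {a b : ι → ℝ} (hw : ∀ i, 0 ≤ w i) (ha : ∀ i, 0 ≤ a i)
    (hab : ∀ i, a i ≤ b i) : ∏ i, a i ^ w i ≤ ∏ i, b i ^ w i :=
  prod_le_prod (fun i _ => Real.rpow_nonneg (ha i) _)
    fun i _ => Real.rpow_le_rpow (ha i) (hab i) (hw i)

theorem prod_rpow_mem_Icc {a : ι → ℝ} {c : ℝ} (hw : ∀ i, 0 ≤ w i) (hsum : ∑ i, w i = 1)
    (ha : ∀ i, a i ∈ Set.Icc 0 c) : ∏ i, a i ^ w i ∈ Set.Icc 0 c := by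
  obtain ⟨j, -, -⟩ := exists_ne_zero_of_sum_ne_zero (hsum ▸ one_ne_zero : ∑ i, w i ≠ 0)
  have hc : 0 ≤ c := (ha j).1.trans (ha j).2
  refine ⟨prod_nonneg fun i _ => Real.rpow_nonneg (ha i).1 _, ?_⟩
  calc ∏ i, a i ^ w i ≤ ∏ i, c ^ w i := prod_rpow_le_prod_rpow_s16 hw (ha · |>.1) (ha · |>.2)
    _ = c ^ ∑ i, w i := (Real.rpow_sum_of_nonneg hc fun i _ => hw i).symm
    _ = c := by rw [hsum, Real.rpow_one]

end WeightedProduct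

section Choquet

variable {m : ℕ}

def permTail (σ : Equiv.Perm (Fin m)) (n : ℕ) : Finset (Fin m) :=
  (univ.filter fun j : Fin m => n ≤ j.val).image σ

theorem permTail_succ_subset (σ : Equiv.Perm (Fin m)) (n : ℕ) :
    permTail σ (n + 1) ⊆ permTail σ n :=
  image_subset_image <| monotone_filter_right _ fun _ _ h => Nat.le_of_succ_le h

theorem permTail_zero (σ : Equiv.Perm (Fin m)) : permTail σ 0 = univ := by
  simp [permTail, image_univ_equiv]

theorem permTail_self (σ : Equiv.Perm (Fin m)) : permTail σ m = ∅ := by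
  simp [permTail, filter_eq_empty_iff, Fin.is_lt]

def choquetWeight (τ : Finset (Fin m) → ℝ) (σ : Equiv.Perm (Fin m)) (k : Fin m) : ℝ :=
  τ (permTail σ k) - τ (permTail σ (k + 1))

theorem choquetWeight_nonneg_s16 {τ : Finset (Fin m) → ℝ} (hτ : Monotone τ)
    (σ : Equiv.Perm (Fin m)) (k : Fin m) : 0 ≤ choquetWeight τ σ k :=
  sub_nonneg.2 <| hτ <| permTail_succ_subset σ k

theorem sum_choquetWeight_s16 (τ : Finset (Fin m) → ℝ) (σ : Equiv.Perm (Fin m)) :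
    ∑ k, choquetWeight τ σ k = τ univ - τ ∅ := calc
  ∑ k, choquetWeight τ σ k = ∑ k ∈ range m, (τ (permTail σ k) - τ (permTail σ (k + 1))) :=
    Fin.sum_univ_eq_sum_range (fun k => τ (permTail σ k) - τ (permTail σ (k + 1))) m
  _ = τ univ - τ ∅ := by rw [sum_range_sub', permTail_zero, permTail_self]

end Choquet

theorem dIFCAIO_p_isDIFV_general (m : ℕ) (τ : Finset (Fin m) → ℝ)
    (hempty : τ ∅ = 0) (huniv : τ Finset.univ = 1)
    (hmono : ∀ A B : Finset (Fin m), A ⊆ B → τ A ≤ τ B)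
    (μ ν r : Fin m → ℝ)
    (hμ : ∀ k, μ k ∈ Set.Icc (0:ℝ) 1) (hν : ∀ k, ν k ∈ Set.Icc (0:ℝ) 1)
    (hμν : ∀ k, μ k + ν k ≤ 1) (hr : ∀ k, r k ∈ Set.Icc (0:ℝ) (Real.sqrt 2))
    (σ : Equiv.Perm (Fin m)) (F : ℕ → Finset (Fin m))
    (hF : ∀ n, F n = (Finset.univ.filter (fun j : Fin m => n ≤ j.val)).image σ)
    (w : Fin m → ℝ) (hw : ∀ k : Fin m, w k = τ (F k.val) - τ (F (k.val + 1))) :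
    (1 - ∏ k, (1 - μ (σ k)) ^ (w k)) ∈ Set.Icc (0:ℝ) 1 ∧
    (∏ k, (ν (σ k)) ^ (w k)) ∈ Set.Icc (0:ℝ) 1 ∧
    (1 - ∏ k, (1 - μ (σ k)) ^ (w k)) + (∏ k, (ν (σ k)) ^ (w k)) ≤ 1 ∧
    (Real.sqrt 2 - ∏ k, (Real.sqrt 2 - r (σ k)) ^ (w k))
      ∈ Set.Icc (0:ℝ) (Real.sqrt 2) := by
  obtain rfl : F = permTail σ := funext hF
  obtain rfl : w = choquetWeight τ σ := funext hw
  have hw₀ : ∀ k, 0 ≤ choquetWeight τ σ k := choquetWeight_nonneg_s16 hmono σ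
  have hw₁ : ∑ k, choquetWeight τ σ k = 1 := by rw [sum_choquetWeight_s16, huniv, hempty, sub_zero]
  have hP := prod_rpow_mem_Icc hw₀ hw₁ fun k => Set.sub_mem_Icc_zero_iff_right.2 (hμ (σ k))
  have hQ := prod_rpow_mem_Icc hw₀ hw₁ fun k => hν (σ k)
  have hQP := prod_rpow_le_prod_rpow_s16 hw₀ (fun k => (hν (σ k)).1)
    fun k => le_sub_iff_add_le'.2 (hμν (σ k))
  have hR := prod_rpow_mem_Icc hw₀ hw₁ fun k => Set.sub_mem_Icc_zero_iff_right.2 (hr (σ k))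
  exact ⟨Set.sub_mem_Icc_zero_iff_right.2 hP, hQ, by linarith,
    Set.sub_mem_Icc_zero_iff_right.2 hR⟩

/-- the disc intuitionistic fuzzy Choquet arithmetic integral
D-IFCAIO_p^τ of D-IFVs θ_1,…,θ_m is a D-IFV.  Here X = Fin m (0-based), σ is a
permutation, F k = {σ(k), σ(k+1), …} (so F m = ∅), and the Choquet weights are
w k = τ(F k) − τ(F (k+1)).  Real powers `x ^ w` are `Real.rpow`. -/
theorem dIFCAIO_p_isDIFV (m : ℕ) (τ : Finset (Fin m) → ℝ)
    (hrange : ∀ A, τ A ∈ Set.Icc (0:ℝ) 1)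
    (hempty : τ ∅ = 0) (huniv : τ Finset.univ = 1)
    (hmono : ∀ A B : Finset (Fin m), A ⊆ B → τ A ≤ τ B)
    (μ ν r : Fin m → ℝ)
    (hμ : ∀ k, μ k ∈ Set.Icc (0:ℝ) 1) (hν : ∀ k, ν k ∈ Set.Icc (0:ℝ) 1)
    (hμν : ∀ k, μ k + ν k ≤ 1) (hr : ∀ k, r k ∈ Set.Icc (0:ℝ) (Real.sqrt 2))
    (σ : Equiv.Perm (Fin m)) (F : ℕ → Finset (Fin m))
    (hF : ∀ n, F n = (Finset.univ.filter (fun j : Fin m => n ≤ j.val)).image σ)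
    (w : Fin m → ℝ) (hw : ∀ k : Fin m, w k = τ (F k.val) - τ (F (k.val + 1))) :
    (1 - ∏ k, (1 - μ (σ k)) ^ (w k)) ∈ Set.Icc (0:ℝ) 1 ∧
    (∏ k, (ν (σ k)) ^ (w k)) ∈ Set.Icc (0:ℝ) 1 ∧
    (1 - ∏ k, (1 - μ (σ k)) ^ (w k)) + (∏ k, (ν (σ k)) ^ (w k)) ≤ 1 ∧
    (Real.sqrt 2 - ∏ k, (Real.sqrt 2 - r (σ k)) ^ (w k))
      ∈ Set.Icc (0:ℝ) (Real.sqrt 2) :=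
  dIFCAIO_p_isDIFV_general m τ hempty huniv hmono μ ν r hμ hν hμν hr σ F hF w hw
end
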